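/- Let q be a prime power and m, n ≥ 1. For every primitive polynomial f ∈ 𝔽_q[X] of degree mn, there exist C_0 ∈ GL_m(𝔽_q) and C_1, …, C_{n−1} ∈ M_m(𝔽_q) such that the associated (m,n)-block companion matrix T ∈ GL_{mn}(𝔽_q) has order q^{mn} − 1 in GL_{mn}(𝔽_q) and has characteristic polynomial equal to f. In other words, the characteristic-polynomial map from the set of (m,n)-block companion Singer cycles to the set of primitive polynomials of degree mn over 𝔽_q is surjective. -/

import Mathlib

/-!
A primitive `f` is irreducible: its root `α` has multiplicative order `q^{mn} - 1` in the
finite ring `E = 𝔽_q[X]/(f)`, so every nonzero element of `E` is a power of `α`, hence a unit.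
Let `K ⊆ E` be a subfield with `q^m` elements. Then `E = K(α)` has `K`-basis
`1, α, …, α^{n-1}`, and for an `𝔽_q`-basis `w` of `K` the matrix of multiplication by `α` in the
basis `w_j α^i` is the block companion matrix whose block `C_i` is multiplication by
`-c_i`, where `c_i` is the `i`-th coefficient of the minimal polynomial of `α` over `K`;
`C_0` is invertible since `c_0 ≠ 0`. This matrix has the order of `α` and characteristic
polynomial `minpoly_{𝔽_q} α = f`.
-/

open Polynomial Matrix

/-- The order of a polynomial `f` over a finite field: the least positive
integer `e` such that `f` divides `X ^ e - 1`. -/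
noncomputable def polyOrd {F : Type*} [Field F] (f : F[X]) : ℕ :=
  sInf {e : ℕ | 0 < e ∧ f ∣ X ^ e - 1}

/-- A monic polynomial `f` of degree `N` over `𝔽_q` is primitive if `f(0) ≠ 0`
and `ord f = q ^ N - 1`. -/
def IsPrimitivePoly {F : Type*} [Field F] [Fintype F] (f : F[X]) : Prop :=
  f.Monic ∧ f.eval 0 ≠ 0 ∧ polyOrd f = Fintype.card F ^ f.natDegree - 1

/-- The `(m,n)`-block companion matrix built from `C_0, C_1, …, C_{n-1} ∈ M_m(𝔽_q)`:
the `n × n` block matrix whose `(i+1, i)` block is `I_m` for `1 ≤ i ≤ n-1`, whose last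
block column is `(C_0, C_1, …, C_{n-1})ᵀ`, and whose remaining blocks are zero. -/
def blockCompanion {F : Type*} [Field F] {m n : ℕ}
    (C : Fin n → Matrix (Fin m) (Fin m) F) :
    Matrix (Fin n × Fin m) (Fin n × Fin m) F :=
  Matrix.of fun p q =>
    if (q.1 : ℕ) = n - 1 then C p.1 p.2 q.2
    else if (p.1 : ℕ) = (q.1 : ℕ) + 1 then (if p.2 = q.2 then 1 else 0) else 0

open scoped IntermediateField

theorem AdjoinRoot.root_pow_eq_one_iff {R : Type*} [CommRing R] (f : R[X]) (e : ℕ) :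
    AdjoinRoot.root f ^ e = 1 ↔ f ∣ X ^ e - 1 := by
  rw [← sub_eq_zero, ← AdjoinRoot.mk_eq_zero, map_sub, map_pow, AdjoinRoot.mk_X, map_one]

theorem orderOf_root_eq_polyOrd {F : Type*} [Field F] (f : F[X]) :
    orderOf (AdjoinRoot.root f) = polyOrd f := by
  have hset : {e : ℕ | 0 < e ∧ f ∣ X ^ e - 1} = {e | 0 < e ∧ AdjoinRoot.root f ^ e = 1} := by
    simp only [AdjoinRoot.root_pow_eq_one_iff]
  rw [polyOrd, hset]
  by_cases h : IsOfFinOrder (AdjoinRoot.root f)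
  · exact le_antisymm (le_csInf ⟨_, h.orderOf_pos, pow_orderOf_eq_one _⟩
      fun e he => orderOf_le_of_pow_eq_one he.1 he.2)
      (Nat.sInf_le ⟨h.orderOf_pos, pow_orderOf_eq_one _⟩)
  · rw [orderOf_eq_zero h, eq_comm, Nat.sInf_eq_zero]
    exact Or.inr (Set.eq_empty_of_forall_notMem fun e he =>
      h (isOfFinOrder_iff_pow_eq_one.2 ⟨e, he⟩))

theorem isField_of_orderOf_eq_natCard_sub_one {R : Type*} [CommRing R] [Finite R] {x : R}
    (hx : orderOf x = Nat.card R - 1) : IsField R := by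
  have : Nontrivial R := by
    by_contra h
    have : Subsingleton R := not_nontrivial_iff_subsingleton.mp h
    have := Finite.card_le_one_iff_subsingleton.mpr this
    rw [Subsingleton.elim x 1, orderOf_one] at hx
    omega
  classical
  have := Fintype.ofFinite R
  have hpos : 0 < orderOf x := by have := Finite.one_lt_card (α := R); omega
  obtain ⟨u, rfl⟩ := IsUnit.of_pow_eq_one (pow_orderOf_eq_one x) hpos.ne'
  let ι : Rˣ → {y : R // y ≠ 0} := fun v => ⟨v, v.ne_zero⟩
  have hι : Function.Bijective ι := by
    refine (Function.Injective.bijective_of_nat_card_le (fun a b h => Units.ext congr($h.1)) ?_)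
    rw [Nat.card_eq_fintype_card, Fintype.card_subtype_compl, Fintype.card_subtype_eq,
      ← Nat.card_eq_fintype_card, ← hx, orderOf_units]
    exact orderOf_le_card
  refine ⟨exists_pair_ne R, mul_comm, fun {a} ha => ?_⟩
  obtain ⟨v, hv⟩ := hι.2 ⟨a, ha⟩
  have hva : (v : R) = a := congrArg Subtype.val hv
  exact ⟨↑v⁻¹, hva ▸ v.mul_inv⟩

namespace IsPrimitivePoly

variable {F : Type*} [Field F] [Fintype F] {f : F[X]}

theorem orderOf_root (hf : IsPrimitivePoly f) :
    orderOf (AdjoinRoot.root f) = Fintype.card F ^ f.natDegree - 1 := by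
  rw [orderOf_root_eq_polyOrd, hf.2.2]

theorem irreducible (hf : IsPrimitivePoly f) : Irreducible f := by
  have hf0 : f ≠ 0 := hf.1.ne_zero
  have : Module.Finite F (AdjoinRoot f) := (AdjoinRoot.powerBasis hf0).finite
  have : Finite (AdjoinRoot f) := Module.finite_of_finite F
  have hcard : Nat.card (AdjoinRoot f) = Fintype.card F ^ f.natDegree := by
    rw [Module.natCard_eq_pow_finrank (K := F), (AdjoinRoot.powerBasis hf0).finrank,
      Nat.card_eq_fintype_card]
    rfl
  have hfield := isField_of_orderOf_eq_natCard_sub_one (hcard ▸ hf.orderOf_root)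
  have hmax : (Ideal.span {f}).IsMaximal := Ideal.Quotient.maximal_of_isField _ hfield
  exact ((Ideal.span_singleton_prime hf0).mp hmax.isPrime).irreducible

end IsPrimitivePoly

theorem FiniteField.exists_intermediateField_finrank_eq {F E : Type*} [Field F] [Field E]
    [Algebra F E] [Finite E] {m : ℕ} (hm : m ≠ 0) (hdvd : m ∣ Module.finrank F E) :
    ∃ K : IntermediateField F E, Module.finrank F K = m := by
  have : Finite F := Finite.of_injective _ (algebraMap F E).injective
  obtain ⟨p, _⟩ := CharP.exists F
  have : Fact p.Prime := ⟨(CharP.char_is_prime_or_zero F p).resolve_right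
    (CharP.char_ne_zero_of_finite F p)⟩
  have : NeZero m := ⟨hm⟩
  obtain ⟨φ⟩ := nonempty_algHom_of_finrank_dvd (K := Extension F p m) (L := E)
    (by rwa [finrank_extension])
  exact ⟨φ.fieldRange, by rw [← φ.equivFieldRange.toLinearEquiv.finrank_eq, finrank_extension]⟩

theorem Algebra.leftMulMatrix_reindex {R S ι κ : Type*} [CommRing R] [Ring S] [Algebra R S]
    [Fintype ι] [DecidableEq ι] [Fintype κ] [DecidableEq κ] (b : Module.Basis ι R S) (e : ι ≃ κ)
    (x : S) :
    Algebra.leftMulMatrix (b.reindex e) x =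
      (Algebra.leftMulMatrix b x).submatrix e.symm e.symm := by
  ext i j
  simp [Algebra.leftMulMatrix_apply, LinearMap.toMatrix_apply]

theorem leftMulMatrix_smulTower_powerBasis_gen_eq_blockCompanion {F K E : Type*} [Field F]
    [CommRing K] [CommRing E] [Algebra F K] [Algebra K E] [Algebra F E] [IsScalarTower F K E]
    {m : ℕ}
    (w : Module.Basis (Fin m) F K) (pb : PowerBasis K E) :
    Algebra.leftMulMatrix ((w.smulTower pb.basis).reindex (Equiv.prodComm _ _)) pb.gen =
      blockCompanion fun i => Algebra.leftMulMatrix w (-(minpoly K pb.gen).coeff i) := by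
  ext ⟨i, r⟩ ⟨k, s⟩
  rw [Algebra.leftMulMatrix_reindex, Matrix.submatrix_apply, Algebra.smulTower_leftMulMatrix,
    pb.leftMulMatrix, blockCompanion]
  simp only [Equiv.prodComm_symm, Equiv.prodComm_apply, Prod.swap_prod_mk, Matrix.of_apply,
    PowerBasis.minpolyGen_eq]
  have hk := k.isLt
  by_cases hlast : (k : ℕ) = pb.dim - 1
  · rw [if_pos (by omega), if_pos hlast]
  · rw [if_neg (by omega), if_neg hlast]
    split_ifs <;> simp [*]

theorem Algebra.charpoly_leftMulMatrix_gen {R S ι : Type*} [Field R] [CommRing S] [Algebra R S]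
    [Fintype ι] [DecidableEq ι] (b : Module.Basis ι R S) (pb : PowerBasis R S) :
    (Algebra.leftMulMatrix b pb.gen).charpoly = minpoly R pb.gen := by
  have : Module.Finite R S := pb.finite
  rw [← charpoly_leftMulMatrix pb, Algebra.leftMulMatrix_apply, Algebra.leftMulMatrix_apply,
    LinearMap.charpoly_toMatrix, LinearMap.charpoly_toMatrix]

theorem exists_basis_leftMulMatrix_eq_blockCompanion {F K E : Type*} [Field F] [Field K] [Field E]
    [Algebra F K] [Algebra K E] [Algebra F E] [IsScalarTower F K E] [FiniteDimensional F K]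
    [FiniteDimensional K E] {m n : ℕ} (hm : Module.finrank F K = m) (hn : Module.finrank K E = n)
    (hn0 : 0 < n) {α : E} (hα : F⟮α⟯ = ⊤) (hα0 : α ≠ 0) :
    ∃ v : Module.Basis (Fin n × Fin m) F E, ∃ C : Fin n → Matrix (Fin m) (Fin m) F,
      IsUnit (C ⟨0, hn0⟩) ∧ Algebra.leftMulMatrix v α = blockCompanion C := by
  have hint : IsIntegral K α := .of_finite K α
  have hadj : Algebra.adjoin K {α} = ⊤ := by
    rw [← IntermediateField.adjoin_simple_toSubalgebra_of_isAlgebraic hint.isAlgebraic,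
      IntermediateField.adjoin_eq_top_of_adjoin_eq_top F hα, IntermediateField.top_toSubalgebra]
  obtain ⟨pb, rfl, rfl⟩ : ∃ pb : PowerBasis K E, pb.gen = α ∧ pb.dim = n :=
    ⟨.ofAdjoinEqTop hint hadj, rfl, (PowerBasis.finrank _).symm.trans hn⟩
  let w := Module.finBasisOfFinrankEq F K hm
  refine ⟨(w.smulTower pb.basis).reindex (Equiv.prodComm _ _), _, ?_,
    leftMulMatrix_smulTower_powerBasis_gen_eq_blockCompanion w pb⟩
  exact (isUnit_iff_ne_zero.2 (neg_ne_zero.2 (minpoly.coeff_zero_ne_zero hint hα0))).map _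

/-- For every primitive polynomial `f` of degree `mn` over `𝔽_q` there is an
`(m,n)`-block companion matrix `T` with `C_0` invertible such that `T` has order
`q^{mn} - 1` in `GL_{mn}(𝔽_q)` and characteristic polynomial `f`: the
characteristic-polynomial map from block companion Singer cycles to primitive
polynomials of degree `mn` is surjective. -/
theorem stmt_17 {F : Type*} [Field F] [Fintype F] (m n : ℕ) (hm : 1 ≤ m) (hn : 1 ≤ n)
    (f : F[X]) (hf : IsPrimitivePoly f) (hdeg : f.natDegree = m * n) :
    ∃ C : Fin n → Matrix (Fin m) (Fin m) F, IsUnit (C ⟨0, hn⟩) ∧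
      ∃ U : (Matrix (Fin n × Fin m) (Fin n × Fin m) F)ˣ,
        (U : Matrix (Fin n × Fin m) (Fin n × Fin m) F) = blockCompanion C ∧
        orderOf U = Fintype.card F ^ (m * n) - 1 ∧
        (blockCompanion C).charpoly = f := by
  have : Fact (Irreducible f) := ⟨hf.irreducible⟩
  let pb := AdjoinRoot.powerBasis hf.1.ne_zero
  have : FiniteDimensional F (AdjoinRoot f) := pb.finite
  have : Finite (AdjoinRoot f) := Module.finite_of_finite F
  have hrank : Module.finrank F (AdjoinRoot f) = m * n := pb.finrank.trans hdeg
  obtain ⟨K, hK⟩ := FiniteField.exists_intermediateField_finrank_eq (by omega : m ≠ 0)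
    (hrank ▸ dvd_mul_right m n)
  have hKE : Module.finrank K (AdjoinRoot f) = n := by
    have := Module.finrank_mul_finrank F K (AdjoinRoot f)
    rw [hK, hrank] at this
    exact Nat.eq_of_mul_eq_mul_left hm this
  have hord : orderOf pb.gen = Fintype.card F ^ (m * n) - 1 := hdeg ▸ hf.orderOf_root
  have hgen0 : pb.gen ≠ 0 := by
    have := Nat.one_lt_pow (by positivity : m * n ≠ 0) (Fintype.one_lt_card (α := F))
    exact (IsUnit.of_pow_eq_one (pow_orderOf_eq_one _) (by omega)).ne_zero
  have hgen : F⟮pb.gen⟯ = ⊤ :=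
    IntermediateField.adjoin_eq_top_of_algebra F _ (AdjoinRoot.adjoinRoot_eq_top)
  obtain ⟨v, C, hC0, hv⟩ := exists_basis_leftMulMatrix_eq_blockCompanion hK hKE hn hgen hgen0
  refine ⟨C, hC0, Units.map (Algebra.leftMulMatrix v).toMonoidHom (Units.mk0 _ hgen0),
    hv, ?_, ?_⟩
  · rw [orderOf_injective _ (Units.map_injective (Algebra.leftMulMatrix_injective v)),
      ← orderOf_units, Units.val_mk0, hord]
  · rw [← hv, Algebra.charpoly_leftMulMatrix_gen, AdjoinRoot.powerBasis_gen,
      AdjoinRoot.minpoly_root hf.1.ne_zero, hf.1.leadingCoeff, inv_one, C_1, mul_one]
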